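/- As t → ∞, the Hardy-Littlewood function satisfies x(t) = 2^{1/2} π^{1/4} t^{-1/4} Z(2t) (1 + O(1/t)). -/

import Mathlib

open Complex Real

noncomputable def fHL (s : ℂ) : ℂ :=
  (Real.pi : ℂ) ^ (-s) * Complex.exp (-(1/2) * (s - 1/4) * Real.pi * Complex.I) *
    Complex.Gamma s * riemannZeta (2 * s)

noncomputable def xHL (t : ℝ) : ℂ := fHL (1/4 + t * Complex.I)

noncomputable def vartheta (t : ℝ) : ℝ :=
  -(t/2) * Real.log Real.pi + (Complex.log (Complex.Gamma (1/4 + Complex.I * t / 2))).im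

noncomputable def hardyZ (t : ℝ) : ℂ :=
  Complex.exp (Complex.I * vartheta t) * riemannZeta (1/2 + Complex.I * t)

/-!
Since `ϑ(2t) = -t log π + arg Γ(1/4 + it)`, the definitions unwind to the exact identity
`x(t) = π^{-1/4} e^{πt/2} |Γ(1/4 + it)| Z(2t)`, so the claim is the Stirling-type estimate
`|Γ(1/4 + it)| = (2π)^{1/2} t^{-1/4} e^{-πt/2} (1 + O(1/t))`.

The duplication and reflection formulas give `(|Γ(1/4 + it)| |Γ(3/4 + it)|)² = 2π² / cosh(2πt)`
exactly, which reduces the estimate to `r = t |Γ(1/4 + it)|² / |Γ(3/4 + it)|² = 1 + O(1/t)`.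
By Gauss's product formula (`GammaSeq`), `r²` is the infinite product
`(t² / D₀) ∏ⱼ Mⱼ² / (Dⱼ Dⱼ₊₁)` with `Dⱼ = (j + 1/4)² + t²` and `Mⱼ = (j + 3/4)² + t²`; its factors
are `1 + O(1/Dⱼ)` and `∑ⱼ 1/Dⱼ = O(1/t)`.
-/

open Filter Topology Finset

lemma abs_log_le_two_mul_abs_sub_one {x : ℝ} (h : |x - 1| ≤ 1/2) :
    |Real.log x| ≤ 2 * |x - 1| := by
  obtain ⟨hlo, -⟩ := abs_le.mp h
  have hx : 0 < x := by linarith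
  have hlower : -(2 * |x - 1|) ≤ (x - 1) / x := by
    rw [le_div_iff₀ hx]
    cases abs_cases (x - 1) <;> nlinarith
  have hinv : 1 - x⁻¹ = (x - 1) / x := by field_simp
  rw [abs_le]
  constructor
  · linarith [one_sub_inv_le_log_of_pos hx]
  · linarith [log_le_sub_one_of_pos hx, le_abs_self (x - 1), abs_nonneg (x - 1)]

lemma abs_sub_one_le_abs_pow_sub_one {x : ℝ} (hx : 0 ≤ x) {n : ℕ} (hn : n ≠ 0) :
    |x - 1| ≤ |x ^ n - 1| := by
  have hsum : 1 ≤ ∑ i ∈ range n, x ^ i := by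
    rw [← pow_zero x]
    exact single_le_sum (fun i _ => pow_nonneg hx i) (mem_range.mpr (Nat.pos_of_ne_zero hn))
  rw [← geom_sum_mul, abs_mul, abs_of_pos (zero_lt_one.trans_le hsum)]
  exact le_mul_of_one_le_left (abs_nonneg _) hsum

lemma sq_prod_range_div {K : Type*} [Field K] (M D : ℕ → K) (hD : ∀ j, D j ≠ 0) (n : ℕ) :
    (∏ j ∈ range n, M j / D j) ^ 2 =
      (∏ j ∈ range n, M j ^ 2 / (D j * D (j + 1))) * (D n / D 0) := by
  induction n with
  | zero => simp [hD 0]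
  | succ n ih =>
    rw [prod_range_succ, prod_range_succ, mul_pow, ih]
    field_simp [hD n, hD (n + 1), hD 0]

lemma norm_GammaSeq (s : ℂ) {n : ℕ} (hn : n ≠ 0) :
    ‖GammaSeq s n‖ = n ^ s.re * n.factorial / ∏ j ∈ range (n + 1), ‖s + j‖ := by
  rw [Complex.GammaSeq, norm_div, norm_mul, norm_natCast_cpow_of_pos (Nat.pos_of_ne_zero hn),
    norm_prod, Complex.norm_natCast]

lemma norm_Gamma_one_half_add_mul_I_sq (y : ℝ) :
    ‖Gamma (1/2 + y * I)‖ ^ 2 = π / Real.cosh (π * y) := by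
  set v : ℂ := 1/2 + y * I with hv
  have hconj : (starRingEnd ℂ) v = 1 - v := by
    apply Complex.ext <;> simp [hv]; norm_num
  have hsin : Complex.sin (π * v) = (Real.cosh (π * y) : ℝ) := by
    rw [hv, mul_add, mul_one_div, Complex.sin_add, ← mul_assoc, ← ofReal_mul, Complex.sin_mul_I,
      Complex.cos_mul_I, ofReal_cosh, Complex.sin_pi_div_two, Complex.cos_pi_div_two]
    ring
  have h := Gamma_mul_Gamma_one_sub v
  rw [← hconj, Gamma_conj, mul_conj, hsin, ← ofReal_div] at h
  rw [Complex.sq_norm]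
  exact_mod_cast h

lemma norm_Gamma_quarter_mul_norm_Gamma_three_quarter_sq (t : ℝ) :
    (‖Gamma (1/4 + t * I)‖ * ‖Gamma (3/4 + t * I)‖) ^ 2 =
      2 * π ^ 2 / Real.cosh (2 * π * t) := by
  have hdup := Gamma_mul_Gamma_add_half (1/4 + t * I)
  rw [show (1/4 + t * I : ℂ) + 1/2 = 3/4 + t * I by ring,
    show 2 * (1/4 + t * I : ℂ) = 1/2 + (2 * t : ℝ) * I by push_cast; ring] at hdup
  have h2 : ‖(2 : ℂ) ^ (1 - (1/2 + (2 * t : ℝ) * I))‖ = √2 := by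
    rw [← ofReal_ofNat, norm_cpow_eq_rpow_re_of_pos two_pos, sqrt_eq_rpow]
    norm_num
  rw [← norm_mul, hdup, norm_mul, norm_mul, h2, norm_real, Real.norm_of_nonneg (sqrt_nonneg _),
    mul_pow, mul_pow, norm_Gamma_one_half_add_mul_I_sq, sq_sqrt zero_le_two,
    sq_sqrt pi_pos.le, ← mul_assoc]
  field_simp

def shiftSq (σ t : ℝ) (j : ℕ) : ℝ := ((j : ℝ) + σ) ^ 2 + t ^ 2

lemma norm_add_natCast_sq (s : ℂ) (j : ℕ) : ‖s + j‖ ^ 2 = shiftSq s.re s.im j := by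
  rw [Complex.sq_norm, normSq_apply, shiftSq]
  simp only [add_re, natCast_re, add_im, natCast_im, add_zero]
  ring

lemma shiftSq_pos {σ : ℝ} (t : ℝ) (hσ : 0 < σ) (j : ℕ) : 0 < shiftSq σ t j := by
  unfold shiftSq; positivity

lemma norm_GammaSeq_div_sq (t : ℝ) {n : ℕ} (hn : n ≠ 0) :
    (‖GammaSeq (1/4 + t * I) n‖ / ‖GammaSeq (3/4 + t * I) n‖) ^ 2 =
      (n : ℝ)⁻¹ * ∏ j ∈ range (n + 1), shiftSq (3/4) t j / shiftSq (1/4) t j := by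
  have hn' : (0 : ℝ) < n := by positivity
  have hD : ∀ j : ℕ, ‖(1/4 + t * I : ℂ) + j‖ ^ 2 = shiftSq (1/4) t j := fun j => by
    simpa using norm_add_natCast_sq (1/4 + t * I) j
  have hM : ∀ j : ℕ, ‖(3/4 + t * I : ℂ) + j‖ ^ 2 = shiftSq (3/4) t j := fun j => by
    simpa using norm_add_natCast_sq (3/4 + t * I) j
  have hD0 : ∏ j ∈ range (n + 1), ‖(1/4 + t * I : ℂ) + j‖ ≠ 0 :=
    prod_ne_zero_iff.mpr fun j _ => (pow_ne_zero_iff two_ne_zero).mp <| by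
      rw [hD j]; exact (shiftSq_pos t (by norm_num) j).ne'
  have hM0 : ∏ j ∈ range (n + 1), ‖(3/4 + t * I : ℂ) + j‖ ≠ 0 :=
    prod_ne_zero_iff.mpr fun j _ => (pow_ne_zero_iff two_ne_zero).mp <| by
      rw [hM j]; exact (shiftSq_pos t (by norm_num) j).ne'
  have hrpow : ((n : ℝ) ^ ((1:ℝ)/4) / (n : ℝ) ^ ((3:ℝ)/4)) ^ 2 = (n : ℝ)⁻¹ := by
    rw [← rpow_sub hn', ← rpow_natCast, ← rpow_mul hn'.le]
    norm_num
    exact rpow_neg_one _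
  have hre1 : (1/4 + t * I : ℂ).re = 1/4 := by simp
  have hre3 : (3/4 + t * I : ℂ).re = 3/4 := by simp
  have hfac : (n.factorial : ℝ) ≠ 0 := by positivity
  rw [norm_GammaSeq _ hn, norm_GammaSeq _ hn, prod_div_distrib]
  simp_rw [← hD, ← hM]
  rw [← hrpow, prod_pow, prod_pow, hre1, hre3]
  field_simp

noncomputable def shiftRatio (t : ℝ) (j : ℕ) : ℝ :=
  shiftSq (3/4) t j ^ 2 / (shiftSq (1/4) t j * shiftSq (1/4) t (j + 1))

lemma shiftRatio_pos (t : ℝ) (j : ℕ) : 0 < shiftRatio t j :=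
  div_pos (pow_pos (shiftSq_pos t (by norm_num) j) 2)
    (mul_pos (shiftSq_pos t (by norm_num) j) (shiftSq_pos t (by norm_num) (j + 1)))

lemma abs_log_shiftRatio_le {t : ℝ} (ht : 2 ≤ t) (j : ℕ) :
    |Real.log (shiftRatio t j)| ≤ 2 / shiftSq (1/4) t j := by
  unfold shiftRatio
  set D := shiftSq (1/4) t j
  set D' := shiftSq (1/4) t (j + 1)
  have hj : (0 : ℝ) ≤ j := j.cast_nonneg
  have hD : 4 ≤ D := by simp only [D, shiftSq]; nlinarith
  have hD' : D' = (j + 5/4) ^ 2 + t ^ 2 := by simp only [D', shiftSq]; push_cast; ring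
  have hD'pos : 0 < D' := by rw [hD']; positivity
  have hnum : shiftSq (3/4) t j ^ 2 - D * D' = (j + 1/2) ^ 2 - D / 2 := by
    rw [hD']; simp only [D, shiftSq]; ring
  have hbracket : |(j + 1/2 : ℝ) ^ 2 - D / 2| ≤ D' := by
    rw [abs_le, hD']; simp only [D, shiftSq]; constructor <;> nlinarith
  have hclose : |shiftSq (3/4) t j ^ 2 / (D * D') - 1| ≤ 1 / D := by
    have hDD' : 0 < D * D' := by positivity
    rw [div_sub_one hDD'.ne', hnum, abs_div, abs_of_pos hDD', div_le_div_iff₀ hDD' (by positivity)]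
    nlinarith
  have hhalf : 1 / D ≤ 1 / 2 := by
    rw [div_le_div_iff₀ (by positivity) two_pos]; linarith
  calc _ ≤ 2 * |shiftSq (3/4) t j ^ 2 / (D * D') - 1| :=
        abs_log_le_two_mul_abs_sub_one (hclose.trans hhalf)
    _ ≤ 2 * (1 / D) := by gcongr
    _ = 2 / D := by ring

lemma sum_range_inv_shiftSq_le {t : ℝ} (ht : 1 ≤ t) (n : ℕ) :
    ∑ j ∈ range n, (shiftSq (1/4) t j)⁻¹ ≤ 4 / t := by
  have hterm : ∀ j : ℕ, (shiftSq (1/4) t j)⁻¹ ≤ 4 * ((j + t)⁻¹ - (↑(j + 1) + t)⁻¹) := by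
    intro j
    have hj : (0 : ℝ) ≤ j := j.cast_nonneg
    have hsub : (j + t : ℝ)⁻¹ - (↑(j + 1) + t)⁻¹ = 1 / ((j + t) * (j + t + 1)) := by
      push_cast; field_simp; ring
    rw [hsub, mul_one_div, inv_eq_one_div, div_le_div_iff₀ (shiftSq_pos t (by norm_num) j)
      (by positivity), shiftSq]
    nlinarith [sq_nonneg ((j : ℝ) - t)]
  calc ∑ j ∈ range n, (shiftSq (1/4) t j)⁻¹
      ≤ ∑ j ∈ range n, 4 * ((j + t)⁻¹ - (↑(j + 1) + t)⁻¹) := sum_le_sum fun j _ => hterm j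
    _ = 4 * ((0 + t)⁻¹ - (n + t)⁻¹) := by
      rw [← mul_sum, sum_range_sub' (fun j : ℕ => ((j : ℝ) + t)⁻¹)]
      push_cast; ring
    _ ≤ 4 / t := by
      have : 0 ≤ ((n : ℝ) + t)⁻¹ := by positivity
      rw [zero_add, div_eq_mul_inv]
      linarith

lemma abs_log_prod_shiftRatio_le {t : ℝ} (ht : 2 ≤ t) (n : ℕ) :
    |Real.log (∏ j ∈ range n, shiftRatio t j)| ≤ 8 / t := by
  rw [Real.log_prod fun j _ => (shiftRatio_pos t j).ne']
  calc _ ≤ ∑ j ∈ range n, 2 * (shiftSq (1/4) t j)⁻¹ :=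
        (abs_sum_le_sum_abs _ _).trans <| sum_le_sum fun j _ => by
          rw [← div_eq_mul_inv]; exact abs_log_shiftRatio_le ht j
    _ ≤ 2 * (4 / t) := by
        rw [← mul_sum]; gcongr; exact sum_range_inv_shiftSq_le (by linarith) n
    _ = 8 / t := by ring

lemma abs_log_sq_div_shiftSq_zero_le {t : ℝ} (ht : 1 ≤ t) :
    |Real.log (t ^ 2 / shiftSq (1/4) t 0)| ≤ 1 / t := by
  have htpos : 0 < t := by linarith
  have hD0 : shiftSq (1/4) t 0 = t ^ 2 + 1/16 := by simp only [shiftSq]; push_cast; ring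
  have hc : 0 < t ^ 2 / (t ^ 2 + 1/16) := by positivity
  have hlo := one_sub_inv_le_log_of_pos hc
  have hhi := log_le_sub_one_of_pos hc
  rw [inv_div, one_sub_div (by positivity)] at hlo
  rw [div_sub_one (by positivity)] at hhi
  rw [hD0, abs_le]
  constructor
  · refine le_trans ?_ hlo
    rw [neg_le, ← neg_div, neg_sub, div_le_div_iff₀ (by positivity) htpos]
    nlinarith
  · refine hhi.trans (le_trans ?_ (by positivity : (0 : ℝ) ≤ 1 / t))
    exact div_nonpos_of_nonpos_of_nonneg (by linarith) (by positivity)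

lemma prod_shiftRatio_mul_eq (t : ℝ) {n : ℕ} (hn : n ≠ 0) :
    (∏ j ∈ range (n + 1), shiftRatio t j) * (t ^ 2 / shiftSq (1/4) t 0) =
      (t * (‖GammaSeq (1/4 + t * I) n‖ / ‖GammaSeq (3/4 + t * I) n‖) ^ 2) ^ 2 /
        (shiftSq (1/4) t (n + 1) / (n : ℝ) ^ 2) := by
  have hD : ∀ j, shiftSq (1/4) t j ≠ 0 := fun j => (shiftSq_pos t (by norm_num) j).ne'
  have hn' : (n : ℝ) ≠ 0 := by exact_mod_cast hn
  rw [mul_pow, norm_GammaSeq_div_sq t hn, mul_pow,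
    sq_prod_range_div (shiftSq (3/4) t) (shiftSq (1/4) t) hD (n + 1)]
  have := hD 0
  have := hD (n + 1)
  simp only [shiftRatio]
  field_simp

lemma tendsto_shiftSq_succ_div_sq (σ t : ℝ) :
    Tendsto (fun n : ℕ => shiftSq σ t (n + 1) / (n : ℝ) ^ 2) atTop (𝓝 1) := by
  have h := (((tendsto_const_nhds (x := (1 : ℝ))).add
    (tendsto_const_div_atTop_nhds_zero_nat (σ + 1))).pow 2).add
      ((tendsto_const_div_atTop_nhds_zero_nat t).pow 2)
  simp only [add_zero, one_pow, ne_eq, OfNat.ofNat_ne_zero, not_false_eq_true, zero_pow] at h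
  refine h.congr' (eventually_ne_atTop 0 |>.mono fun n hn => ?_)
  have : (n : ℝ) ≠ 0 := by exact_mod_cast hn
  simp only [shiftSq]
  push_cast
  field_simp
  ring

lemma tendsto_prod_shiftRatio_mul (t : ℝ) :
    Tendsto (fun n => (∏ j ∈ range (n + 1), shiftRatio t j) * (t ^ 2 / shiftSq (1/4) t 0))
      atTop (𝓝 ((t * (‖Gamma (1/4 + t * I)‖ / ‖Gamma (3/4 + t * I)‖) ^ 2) ^ 2)) := by
  have hA := (continuous_norm.tendsto _).comp (GammaSeq_tendsto_Gamma (1/4 + t * I))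
  have hB := (continuous_norm.tendsto _).comp (GammaSeq_tendsto_Gamma (3/4 + t * I))
  have hB0 : ‖Gamma (3/4 + t * I)‖ ≠ 0 :=
    norm_ne_zero_iff.mpr (Gamma_ne_zero_of_re_pos (by simp))
  have h := ((((hA.div hB hB0).pow 2).const_mul t).pow 2).div
    (tendsto_shiftSq_succ_div_sq (1/4) t) one_ne_zero
  rw [div_one] at h
  exact h.congr' (eventually_ne_atTop 0 |>.mono fun n hn => (prod_shiftRatio_mul_eq t hn).symm)

lemma abs_log_norm_Gamma_ratio_le {t : ℝ} (ht : 2 ≤ t) :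
    |Real.log (t * (‖Gamma (1/4 + t * I)‖ / ‖Gamma (3/4 + t * I)‖) ^ 2)| ≤ 5 / t := by
  set r := t * (‖Gamma (1/4 + t * I)‖ / ‖Gamma (3/4 + t * I)‖) ^ 2
  have htpos : 0 < t := by linarith
  have hr : 0 < r := by
    have := Gamma_ne_zero_of_re_pos (s := 1/4 + t * I) (by simp)
    have := Gamma_ne_zero_of_re_pos (s := 3/4 + t * I) (by simp)
    positivity
  have hbound : ∀ n,
      |Real.log ((∏ j ∈ range (n + 1), shiftRatio t j) * (t ^ 2 / shiftSq (1/4) t 0))| ≤ 9 / t :=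
    fun n => by
      rw [Real.log_mul (prod_pos fun j _ => shiftRatio_pos t j).ne'
        (div_pos (by positivity) (shiftSq_pos t (by norm_num) 0)).ne']
      calc _ ≤ 8 / t + 1 / t := (abs_add_le _ _).trans
            (add_le_add (abs_log_prod_shiftRatio_le ht (n + 1))
              (abs_log_sq_div_shiftSq_zero_le (by linarith)))
        _ = 9 / t := by ring
  have hlog_sq : |Real.log (r ^ 2)| ≤ 9 / t :=
    le_of_tendsto' (((continuousAt_log (by positivity)).tendsto.comp
      (tendsto_prod_shiftRatio_mul t)).abs) hbound
  rw [Real.log_pow, Nat.cast_ofNat, abs_mul, abs_two] at hlog_sq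
  calc _ ≤ 9 / t / 2 := by linarith
    _ ≤ 5 / t := by rw [div_div, div_le_div_iff₀ (by positivity) htpos]; nlinarith

noncomputable def hardyFactor (t : ℝ) : ℝ :=
  π ^ (-(1:ℝ)/4) * Real.exp (π * t / 2) * ‖Gamma (1/4 + t * I)‖

lemma xHL_eq_hardyFactor_mul_hardyZ (t : ℝ) : xHL t = hardyFactor t * hardyZ (2 * t) := by
  rw [hardyFactor]
  set w : ℂ := 1/4 + t * I with hw
  have hΓ : Gamma w = ‖Gamma w‖ * cexp (arg (Gamma w) * I) := (norm_mul_exp_arg_mul_I _).symm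
  have hpow : (π : ℂ) ^ (-w) = (π ^ (-(1:ℝ)/4) : ℝ) * cexp (I * (-t * Real.log π)) := by
    rw [cpow_def_of_ne_zero (ofReal_ne_zero.mpr pi_ne_zero), ← ofReal_log pi_pos.le,
      rpow_def_of_pos pi_pos, ofReal_exp, ← Complex.exp_add, hw]
    push_cast
    ring_nf
  have hrot : cexp (-(1/2) * (w - 1/4) * π * I) = (Real.exp (π * t / 2) : ℝ) := by
    rw [ofReal_exp, hw]
    congr 1
    push_cast
    ring_nf
    rw [I_sq]
    ring
  have hϑ : vartheta (2 * t) = -t * Real.log π + arg (Gamma w) := by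
    rw [vartheta, log_im]
    congr 3 <;> push_cast <;> ring
  have hζ : 2 * w = 1/2 + I * (2 * t : ℝ) := by rw [hw]; push_cast; ring
  rw [xHL, fHL, hardyZ, hϑ, hζ, hpow, hrot]
  conv_lhs => rw [hΓ]
  push_cast
  rw [mul_add, Complex.exp_add]
  ring_nf

lemma hardyFactor_div_pow_four {t : ℝ} (ht : 0 < t) :
    (hardyFactor t / (2 ^ ((1:ℝ)/2) * π ^ ((1:ℝ)/4) * t ^ (-(1:ℝ)/4))) ^ 4 =
      t * (‖Gamma (1/4 + t * I)‖ / ‖Gamma (3/4 + t * I)‖) ^ 2 /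
        (1 + Real.exp (-(4 * π * t))) := by
  have hpow : ∀ {x : ℝ}, 0 ≤ x → ∀ a : ℝ, (x ^ a) ^ 4 = x ^ (a * 4) := fun hx a => by
    rw [← rpow_mul_natCast hx]; norm_num
  have hprod := norm_Gamma_quarter_mul_norm_Gamma_three_quarter_sq t
  have hg1 : 0 < ‖Gamma (1/4 + t * I)‖ := norm_pos_iff.mpr (Gamma_ne_zero_of_re_pos (by simp))
  have hg3 : 0 < ‖Gamma (3/4 + t * I)‖ := norm_pos_iff.mpr (Gamma_ne_zero_of_re_pos (by simp))
  have hcosh : Real.cosh (2 * π * t) =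
      (Real.exp (π * t / 2) ^ 4 + (Real.exp (π * t / 2) ^ 4)⁻¹) / 2 := by
    rw [Real.cosh_eq, Real.exp_neg, ← Real.exp_nat_mul]; ring_nf
  have hu : Real.exp (-(4 * π * t)) = ((Real.exp (π * t / 2) ^ 4) ^ 2)⁻¹ := by
    rw [Real.exp_neg, ← Real.exp_nat_mul, ← Real.exp_nat_mul]; ring_nf
  rw [hcosh] at hprod
  rw [hardyFactor, hu, div_pow, mul_pow, mul_pow, mul_pow, mul_pow, hpow pi_pos.le,
    hpow pi_pos.le, hpow zero_le_two, hpow ht.le, show -(1:ℝ)/4 * 4 = -1 by norm_num,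
    show (1:ℝ)/4 * 4 = 1 by norm_num, show (1:ℝ)/2 * 4 = 2 by norm_num, rpow_neg_one,
    rpow_neg_one, rpow_one, rpow_two]
  generalize ‖Gamma (1/4 + t * I)‖ = g1 at *
  generalize ‖Gamma (3/4 + t * I)‖ = g3 at *
  have hE := Real.exp_pos (π * t / 2)
  generalize Real.exp (π * t / 2) = E at *
  have := pi_pos
  field_simp at hprod ⊢
  exact hprod

lemma abs_hardyFactor_div_sub_one_le {t : ℝ} (ht : 5 ≤ t) :
    |hardyFactor t / (2 ^ ((1:ℝ)/2) * π ^ ((1:ℝ)/4) * t ^ (-(1:ℝ)/4)) - 1| ≤ 11 / t := by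
  have htpos : 0 < t := by linarith
  set r := t * (‖Gamma (1/4 + t * I)‖ / ‖Gamma (3/4 + t * I)‖) ^ 2
  set u := Real.exp (-(4 * π * t))
  have hlog_r : |Real.log r| ≤ 5 / t := abs_log_norm_Gamma_ratio_le (by linarith)
  have hr : |r - 1| ≤ 10 / t := by
    have hr_pos : 0 < r := by
      have := Gamma_ne_zero_of_re_pos (s := 1/4 + t * I) (by simp)
      have := Gamma_ne_zero_of_re_pos (s := 3/4 + t * I) (by simp)
      positivity
    have hsmall : |Real.log r| ≤ 1 := hlog_r.trans (by rw [div_le_one htpos]; linarith)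
    calc |r - 1| = |Real.exp (Real.log r) - 1| := by rw [Real.exp_log hr_pos]
      _ ≤ 2 * |Real.log r| := Real.abs_exp_sub_one_le hsmall
      _ ≤ 2 * (5 / t) := by gcongr
      _ = 10 / t := by ring
  have hu_pos : 0 < u := Real.exp_pos _
  have hu : u ≤ 1 / t := by
    simp only [u]
    rw [Real.exp_neg, inv_eq_one_div, div_le_div_iff₀ (Real.exp_pos _) htpos]
    nlinarith [Real.add_one_le_exp (4 * π * t), pi_gt_three]
  have hK : 0 ≤ hardyFactor t / (2 ^ ((1:ℝ)/2) * π ^ ((1:ℝ)/4) * t ^ (-(1:ℝ)/4)) := by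
    unfold hardyFactor; positivity
  calc _ ≤ |r / (1 + u) - 1| := by
        rw [← hardyFactor_div_pow_four htpos]
        exact abs_sub_one_le_abs_pow_sub_one hK four_ne_zero
    _ = |(r - 1) - u| / (1 + u) := by
        rw [div_sub_one (by positivity), abs_div, abs_of_pos (by positivity : 0 < 1 + u)]
        ring_nf
    _ ≤ |(r - 1) - u| := div_le_self (abs_nonneg _) (by linarith)
    _ ≤ |r - 1| + u := (abs_sub _ _).trans (by rw [abs_of_pos hu_pos])
    _ ≤ 11 / t := by linarith [show 10 / t + 1 / t = 11 / t by ring]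

theorem stmt_3 :
    ∃ C t₀ : ℝ, 0 < C ∧ 0 < t₀ ∧ ∀ t : ℝ, t₀ ≤ t →
      ∃ E : ℂ, ‖E‖ ≤ C / t ∧
        xHL t = (((2:ℝ) ^ ((1:ℝ)/2) * Real.pi ^ ((1:ℝ)/4) * t ^ (-(1:ℝ)/4) : ℝ) : ℂ) *
          hardyZ (2 * t) * (1 + E) := by
  refine ⟨11, 5, by norm_num, by norm_num, fun t ht => ?_⟩
  have hlead : (2:ℝ) ^ ((1:ℝ)/2) * π ^ ((1:ℝ)/4) * t ^ (-(1:ℝ)/4) ≠ 0 := by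
    have : 0 < t := by linarith
    positivity
  refine ⟨((hardyFactor t / (2 ^ ((1:ℝ)/2) * π ^ ((1:ℝ)/4) * t ^ (-(1:ℝ)/4)) - 1 : ℝ) : ℂ),
    ?_, ?_⟩
  · rw [norm_real, Real.norm_eq_abs]
    exact abs_hardyFactor_div_sub_one_le ht
  · rw [xHL_eq_hardyFactor_mul_hardyZ, ofReal_sub, ofReal_one, add_sub_cancel, mul_right_comm,
      ← ofReal_mul, mul_div_cancel₀ _ hlead]
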